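/- arXiv:1309.4439 — 3 statements merged into one kernel-verified Lean document; each statement's English description precedes it below -/
import Mathlib

section
/- For integers n ≥ 1 and 1 ≤ m ≤ n define c(n, m) = (1/m)·Σ_{k=1}^{m} (−1)^{m−k}·C(m, k)·kⁿ, where C(m, k) are binomial coefficients. Then for every integer n ≥ 1 and every real x > 0, (−1)^{n−1}·g^{(n−1)}(x) = Σ_{m=1}^{n} c(n, m)/(e^x − 1)^m, where g(x) = (e^x − 1)^{−1} and g^{(n−1)} is its (n−1)-st derivative. -/
/-! The coefficients are `c(n, m) = (m - 1)! S(n, m)`, with `S` the Stirling numbers of the second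
kind, because `m! S(n, m)` is the `m`-th forward difference of `k ↦ kⁿ` at `0`. The function
`u = (eˣ - 1)⁻¹` solves `u' = -u (1 + u)`, so the derivative of `∑ₘ (m - 1)! S(n, m) uᵐ` is
`-∑ₘ m! S(n, m) (uᵐ + uᵐ⁺¹)`, which is `-∑ₘ (m - 1)! S(n + 1, m) uᵐ` by the recurrence
`S(n + 1, m) = m S(n, m) + S(n, m - 1)`. -/

open Finset Function fwdDiff Topology
open scoped Nat

-- `]^` is a token of Mathlib (exterior powers), hence the space in `Δ_[h] ^[m]`.

section Combinatorics

variable {R : Type*} [CommRing R]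

lemma fwdDiff_iter_succ_apply {M G : Type*} [AddCommMonoid M] [AddCommGroup G] (h : M)
    (f : M → G) (m : ℕ) (y : M) :
    Δ_[h] ^[m + 1] f y = Δ_[h] ^[m] f (y + h) - Δ_[h] ^[m] f y := by
  rw [iterate_succ_apply']
  rfl

lemma fwdDiff_iter_succ_mul_self_apply_zero (f : ℕ → R) (m : ℕ) :
    Δ_[1] ^[m + 1] (fun k : ℕ ↦ (k : R) * f k) 0 = (m + 1) * Δ_[1] ^[m] f 1 := by
  simp only [fwdDiff_iter_eq_sum_shift, zero_add, smul_eq_mul, mul_one, sum_range_succ' _ (m + 1),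
    Nat.cast_zero, zero_mul, mul_zero, add_zero, mul_sum, zsmul_eq_mul]
  refine sum_congr rfl fun k _ ↦ ?_
  have h : ((m + 1).choose (k + 1) : R) * (k + 1) = (m + 1) * m.choose k := by
    simpa using congrArg (Nat.cast : ℕ → R) (Nat.add_one_mul_choose_eq m k).symm
  rw [Nat.add_sub_add_right, add_comm 1 k]
  push_cast
  linear_combination ((-1 : R) ^ (m - k) * f (k + 1)) * h

theorem fwdDiff_iter_pow_apply_zero (n m : ℕ) :
    Δ_[1] ^[m] (fun k : ℕ ↦ (k : R) ^ n) 0 = m ! * Nat.stirlingSecond n m := by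
  induction n generalizing m with
  | zero =>
    cases m with
    | zero => simp
    | succ m => rw [iterate_succ_apply]; simp [fwdDiff_iter_eq_sum_shift]
  | succ n ih =>
    cases m with
    | zero => simp
    | succ m =>
      simp_rw [_root_.pow_succ', fwdDiff_iter_succ_mul_self_apply_zero]
      rw [← sub_add_cancel (Δ_[1] ^[m] _ 1) (Δ_[1] ^[m] _ 0), ← fwdDiff_iter_succ_apply, ih, ih,
        Nat.stirlingSecond_succ_succ, Nat.factorial_succ]
      push_cast
      ring

theorem sum_Icc_neg_one_pow_mul_choose_mul_pow {n : ℕ} (hn : n ≠ 0) (m : ℕ) :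
    ∑ k ∈ Icc 1 m, (-1 : R) ^ (m - k) * m.choose k * (k : R) ^ n = m ! * Nat.stirlingSecond n m := by
  rw [← fwdDiff_iter_pow_apply_zero, fwdDiff_iter_eq_sum_shift, range_eq_Ico,
    sum_eq_sum_Ico_succ_bot m.succ_pos]
  simp [zero_pow hn, Ico_add_one_right_eq_Icc, mul_assoc]

noncomputable def stirlingSum (n : ℕ) (u : R) : R :=
  ∑ m ∈ range n, (m ! * Nat.stirlingSecond n (m + 1) : R) * u ^ (m + 1)

lemma stirlingSum_one (u : R) : stirlingSum 1 u = u := by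
  simp [stirlingSum, Nat.stirlingSecond_self]

lemma stirlingSum_succ {n : ℕ} (hn : n ≠ 0) (u : R) :
    stirlingSum (n + 1) u =
      ∑ m ∈ range n, ((m + 1) ! * Nat.stirlingSecond n (m + 1) : R) * (u ^ (m + 1) + u ^ (m + 2)) := by
  have htop : ∑ m ∈ range (n + 1), ((m + 1) ! * Nat.stirlingSecond n (m + 1) : R) * u ^ (m + 1) =
      ∑ m ∈ range n, ((m + 1) ! * Nat.stirlingSecond n (m + 1) : R) * u ^ (m + 1) := by
    simp [sum_range_succ, Nat.stirlingSecond_eq_zero_of_lt n.lt_succ_self]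
  have hbot : ∑ m ∈ range (n + 1), (m ! * Nat.stirlingSecond n m : R) * u ^ (m + 1) =
      ∑ m ∈ range n, ((m + 1) ! * Nat.stirlingSecond n (m + 1) : R) * u ^ (m + 2) := by
    obtain ⟨k, rfl⟩ := Nat.exists_eq_succ_of_ne_zero hn
    simp [sum_range_succ' _ (k + 1)]
  calc stirlingSum (n + 1) u
      = ∑ m ∈ range (n + 1), ((m + 1) ! * Nat.stirlingSecond n (m + 1) : R) * u ^ (m + 1) +
          ∑ m ∈ range (n + 1), (m ! * Nat.stirlingSecond n m : R) * u ^ (m + 1) := by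
        rw [stirlingSum, ← sum_add_distrib]
        refine sum_congr rfl fun m _ ↦ ?_
        rw [Nat.stirlingSecond_succ_succ, Nat.factorial_succ]
        push_cast
        ring
    _ = _ := by rw [htop, hbot, ← sum_add_distrib]; simp only [mul_add]

end Combinatorics

section Riccati

variable {𝕜 : Type*} [NontriviallyNormedField 𝕜] {u : 𝕜 → 𝕜}

lemma HasDerivAt.pow_succ_of_riccati {x : 𝕜} (hu : HasDerivAt u (-(u x * (1 + u x))) x) (m : ℕ) :
    HasDerivAt (fun y ↦ u y ^ (m + 1)) (-((m + 1) * (u x ^ (m + 1) + u x ^ (m + 2)))) x := by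
  refine (hu.pow (m + 1)).congr_deriv ?_
  rw [Nat.add_sub_cancel]
  push_cast
  ring

lemma HasDerivAt.stirlingSum_comp {x : 𝕜} (hu : HasDerivAt u (-(u x * (1 + u x))) x) {n : ℕ}
    (hn : n ≠ 0) : HasDerivAt (fun y ↦ stirlingSum n (u y)) (-stirlingSum (n + 1) (u x)) x := by
  have := HasDerivAt.fun_sum (u := range n) fun m _ ↦
    (hu.pow_succ_of_riccati m).const_mul (m ! * Nat.stirlingSecond n (m + 1) : 𝕜)
  refine this.congr_deriv ?_
  rw [stirlingSum_succ hn, ← sum_neg_distrib]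
  refine sum_congr rfl fun m _ ↦ ?_
  rw [Nat.factorial_succ]
  push_cast
  ring

theorem iteratedDeriv_eq_neg_one_pow_mul_stirlingSum {s : Set 𝕜} (hs : IsOpen s)
    (hu : ∀ x ∈ s, HasDerivAt u (-(u x * (1 + u x))) x) (j : ℕ) :
    ∀ x ∈ s, iteratedDeriv j u x = (-1) ^ j * stirlingSum (j + 1) (u x) := by
  induction j with
  | zero => simp [stirlingSum_one]
  | succ j ih =>
    intro x hx
    have hev : iteratedDeriv j u =ᶠ[𝓝 x] fun y ↦ (-1) ^ j * stirlingSum (j + 1) (u y) :=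
      Filter.eventually_of_mem (hs.mem_nhds hx) ih
    rw [iteratedDeriv_succ, hev.deriv_eq,
      (((hu x hx).stirlingSum_comp j.succ_ne_zero).const_mul _).deriv, pow_succ]
    ring

end Riccati

lemma Real.hasDerivAt_inv_exp_sub_one {x : ℝ} (hx : x ≠ 0) :
    HasDerivAt (fun y ↦ (Real.exp y - 1)⁻¹)
      (-((Real.exp x - 1)⁻¹ * (1 + (Real.exp x - 1)⁻¹))) x := by
  have h : Real.exp x - 1 ≠ 0 := sub_ne_zero.2 (Real.exp_eq_one_iff x |>.not.2 hx)
  refine (((Real.hasDerivAt_exp x).sub_const 1).inv h).congr_deriv ?_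
  field_simp
  ring

/-- Explicit expansion of the iterated derivatives of `g(x) = (e^x − 1)⁻¹`:
with `c(n, m) = (1/m)·Σ_{k=1}^{m} (−1)^{m−k}·C(m,k)·kⁿ` one has
`(−1)^{n−1}·g^{(n−1)}(x) = Σ_{m=1}^{n} c(n,m)/(e^x − 1)^m` for all `n ≥ 1`, `x > 0`. -/
theorem iterated_deriv_g_expansion :
    let g : ℝ → ℝ := fun x => (Real.exp x - 1)⁻¹
    let c : ℕ → ℕ → ℝ := fun n m =>
      (1 / (m : ℝ)) * ∑ k ∈ Finset.Icc 1 m, (-1 : ℝ) ^ (m - k) * (m.choose k) * (k : ℝ) ^ n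
    ∀ n : ℕ, 1 ≤ n → ∀ x : ℝ, x > 0 →
      (-1 : ℝ) ^ (n - 1) * iteratedDeriv (n - 1) g x =
        ∑ m ∈ Finset.Icc 1 n, c n m / (Real.exp x - 1) ^ m := by
  intro g c n hn x hx
  obtain ⟨j, rfl⟩ := Nat.exists_eq_add_of_le' hn
  have hc : ∀ m : ℕ, c (j + 1) (m + 1) = m ! * Nat.stirlingSecond (j + 1) (m + 1) := fun m ↦ by
    simp only [c, sum_Icc_neg_one_pow_mul_choose_mul_pow j.succ_ne_zero, Nat.factorial_succ]
    push_cast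
    field_simp
  have hsum : ∑ m ∈ Icc 1 (j + 1), c (j + 1) m / (Real.exp x - 1) ^ m =
      stirlingSum (j + 1) (Real.exp x - 1)⁻¹ := by
    rw [stirlingSum, ← Ico_add_one_right_eq_Icc, sum_Ico_eq_sum_range, Nat.add_sub_cancel]
    refine sum_congr rfl fun m _ ↦ ?_
    rw [add_comm 1 m, hc, inv_pow, div_eq_mul_inv]
  rw [Nat.add_sub_cancel, hsum, iteratedDeriv_eq_neg_one_pow_mul_stirlingSum isOpen_compl_singleton
    (fun y hy ↦ Real.hasDerivAt_inv_exp_sub_one hy) j x hx.ne', ← mul_assoc, ← mul_pow]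
  simp
end

section
/- Define c(n, m) = (1/m)·Σ_{k=1}^{m} (−1)^{m−k}·C(m, k)·kⁿ for integers n ≥ 1, 1 ≤ m ≤ n, and set c(n, 0) = 0. Then c(n, 1) = 1 for all n ≥ 1, c(n, n) = (n − 1)! for all n ≥ 1, and the recurrence c(n + 1, m) = m·c(n, m) + (m − 1)·c(n, m − 1) holds for all n ≥ 1 and 1 ≤ m ≤ n. -/
open Finset

private noncomputable def S (n m : ℕ) : ℝ :=
  ∑ k ∈ Finset.Icc 1 m, (-1 : ℝ) ^ (m - k) * (m.choose k) * (k : ℝ) ^ n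

private lemma S_key (n m : ℕ) (hm : m ≠ 0) :
    S (n + 1) m = m * (S n m + S n (m - 1)) := by
  obtain ⟨m', rfl⟩ := Nat.exists_eq_succ_of_ne_zero hm
  rw [show m' + 1 - 1 = m' from rfl]
  have hext : S n m' =
      -∑ k ∈ Finset.Icc 1 (m' + 1), (-1 : ℝ) ^ (m' + 1 - k) * (m'.choose k) * (k : ℝ) ^ n := by
    rw [Finset.sum_Icc_succ_top (by omega)]
    rw [Nat.choose_succ_self]
    rw [S, neg_add, ← Finset.sum_neg_distrib]
    simp only [Nat.cast_zero, mul_zero, zero_mul, neg_zero, add_zero]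
    apply Finset.sum_congr rfl
    intro k hk
    simp only [Finset.mem_Icc] at hk
    have h1 : m' + 1 - k = (m' - k) + 1 := by omega
    rw [h1, pow_succ]
    ring
  have hcomb : S n (m' + 1) + S n m' =
      ∑ k ∈ Finset.Icc 1 (m' + 1), (-1 : ℝ) ^ (m' + 1 - k) *
        ((((m' + 1).choose k : ℝ)) - (m'.choose k : ℝ)) * (k : ℝ) ^ n := by
    rw [hext, S, ← sub_eq_add_neg, ← Finset.sum_sub_distrib]
    apply Finset.sum_congr rfl
    intro k hk
    ring
  rw [hcomb, S, Finset.mul_sum]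
  apply Finset.sum_congr rfl
  intro k hk
  simp only [Finset.mem_Icc] at hk
  obtain ⟨k', rfl⟩ := Nat.exists_eq_succ_of_ne_zero (by omega : k ≠ 0)
  simp only [Nat.succ_eq_add_one] at hk ⊢
  have hP : (((m' + 1).choose (k' + 1) : ℕ) : ℝ) = (m'.choose k' : ℝ) + (m'.choose (k' + 1) : ℝ) := by
    rw [Nat.choose_succ_succ]
    push_cast
    ring
  have hM : ((m' + 1 : ℕ) : ℝ) * (m'.choose k' : ℝ) =
      ((m' + 1).choose (k' + 1) : ℝ) * ((k' + 1 : ℕ) : ℝ) := by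
    exact_mod_cast congrArg (Nat.cast : ℕ → ℝ) (Nat.add_one_mul_choose_eq m' k')
  simp only [Nat.succ_sub_succ]
  push_cast at hP hM ⊢
  linear_combination (-((-1 : ℝ) ^ (m' - k') * ((k' : ℝ) + 1) ^ n)) * hM -
    ((m' : ℝ) + 1) * ((-1 : ℝ) ^ (m' - k') * ((k' : ℝ) + 1) ^ n) * hP

private lemma S_zero_n (m : ℕ) (hm : 1 ≤ m) : S 0 m = -(-1 : ℝ) ^ m := by
  have halt : ∑ k ∈ Finset.range (m + 1), (-1 : ℝ) ^ k * (m.choose k : ℝ) = 0 := by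
    have := Int.alternating_sum_range_choose (n := m)
    rw [if_neg (by omega)] at this
    exact_mod_cast congrArg (Int.cast : ℤ → ℝ) this
  have hIcc : Finset.Icc 1 m = (Finset.range (m + 1)).erase 0 := by
    ext k; simp [Nat.lt_succ_iff]; omega
  have h0 : (0 : ℕ) ∈ Finset.range (m + 1) := by simp
  have hsum : ∑ k ∈ Finset.range (m + 1), (-1 : ℝ) ^ (m - k) * (m.choose k : ℝ) = 0 := by
    have : ∀ k ∈ Finset.range (m + 1), (-1 : ℝ) ^ (m - k) * (m.choose k : ℝ) =
        (-1 : ℝ) ^ m * ((-1 : ℝ) ^ k * (m.choose k : ℝ)) := by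
      intro k hk
      simp only [Finset.mem_range, Nat.lt_succ_iff] at hk
      have h1 : (-1 : ℝ) ^ (m - k) * (-1 : ℝ) ^ k = (-1 : ℝ) ^ m := by
        rw [← pow_add]; congr 1; omega
      have h2 : (-1 : ℝ) ^ k * (-1 : ℝ) ^ k = 1 := by
        rw [← pow_add, Even.neg_one_pow ⟨k, by ring⟩]
      linear_combination ((-1 : ℝ) ^ k * (m.choose k : ℝ)) * h1 -
        ((-1 : ℝ) ^ (m - k) * (m.choose k : ℝ)) * h2
    rw [Finset.sum_congr rfl this, ← Finset.mul_sum, halt, mul_zero]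
  have hs := Finset.sum_erase_add (Finset.range (m + 1))
    (fun k => (-1 : ℝ) ^ (m - k) * (m.choose k : ℝ)) h0
  rw [S]
  simp only [pow_zero, mul_one]
  rw [hIcc]
  simp only [Nat.sub_zero, Nat.choose_zero_right, Nat.cast_one, mul_one] at hs
  rw [hsum] at hs
  linarith [hs]

private lemma S_vanish (n : ℕ) (hn : 1 ≤ n) : ∀ m, n < m → S n m = 0 := by
  induction n, hn using Nat.le_induction with
  | base =>
    intro m hm
    have h1 : S 1 m = S (0 + 1) m := by norm_num
    rw [h1, S_key 0 m (by omega), S_zero_n m (by omega), S_zero_n (m - 1) (by omega)]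
    obtain ⟨m', rfl⟩ := Nat.exists_eq_succ_of_ne_zero (show m ≠ 0 by omega)
    rw [show m' + 1 - 1 = m' from rfl, pow_succ]
    ring
  | succ n hn ih =>
    intro m hm
    rw [S_key n m (by omega), ih m (by omega), ih (m - 1) (by omega)]
    ring

private lemma S_diag (n : ℕ) (hn : 1 ≤ n) : S n n = (Nat.factorial n : ℝ) := by
  induction n, hn using Nat.le_induction with
  | base => simp [S]
  | succ n hn ih =>
    rw [S_key n (n + 1) (by omega), show n + 1 - 1 = n from rfl,
      S_vanish n hn (n + 1) (by omega), ih, Nat.factorial_succ]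
    push_cast
    ring

/-- Properties of the coefficients `c(n, m) = (1/m)·Σ_{k=1}^{m} (−1)^{m−k}·C(m,k)·kⁿ`
(with `c(n, 0) = 0`): `c(n, 1) = 1`, `c(n, n) = (n − 1)!`, and the recurrence
`c(n + 1, m) = m·c(n, m) + (m − 1)·c(n, m − 1)` for `1 ≤ m ≤ n`. -/
theorem cumulant_coefficients_properties :
    let c : ℕ → ℕ → ℝ := fun n m =>
      if m = 0 then 0 else
        (1 / (m : ℝ)) * ∑ k ∈ Finset.Icc 1 m, (-1 : ℝ) ^ (m - k) * (m.choose k) * (k : ℝ) ^ n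
    (∀ n : ℕ, 1 ≤ n → c n 1 = 1) ∧
    (∀ n : ℕ, 1 ≤ n → c n n = Nat.factorial (n - 1)) ∧
    (∀ n m : ℕ, 1 ≤ n → 1 ≤ m → m ≤ n →
      c (n + 1) m = m * c n m + (m - 1 : ℝ) * c n (m - 1)) := by
  intro c
  have hc : ∀ n m : ℕ, m ≠ 0 → c n m = (1 / (m : ℝ)) * S n m := by
    intro n m hm
    simp only [c, if_neg hm, S]
  have hc0 : ∀ n : ℕ, c n 0 = 0 := by intro n; simp [c]
  refine ⟨?_, ?_, ?_⟩
  · intro n hn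
    rw [hc n 1 one_ne_zero]
    simp [S]
  · intro n hn
    rw [hc n n (by omega), S_diag n hn]
    obtain ⟨n', rfl⟩ := Nat.exists_eq_succ_of_ne_zero (show n ≠ 0 by omega)
    rw [show n' + 1 - 1 = n' from rfl, Nat.factorial_succ]
    push_cast
    field_simp
  · intro n m hn hm hmn
    rw [hc (n + 1) m (by omega), hc n m (by omega), S_key n m (by omega)]
    rcases Nat.eq_or_lt_of_le hm with h1 | h2
    · -- m = 1
      rw [← h1]
      simp only [Nat.sub_self, hc0]
      have h0 : S n 0 = 0 := by simp [S]
      rw [h0]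
      norm_num
    · -- m ≥ 2
      rw [hc n (m - 1) (by omega)]
      have hm0 : (m : ℝ) ≠ 0 := by positivity
      have hm1 : ((m - 1 : ℕ) : ℝ) = (m : ℝ) - 1 := by
        push_cast [Nat.cast_sub (by omega : 1 ≤ m)]; ring
      rw [hm1]
      have hm10 : (m : ℝ) - 1 ≠ 0 := by
        have : (2 : ℝ) ≤ (m : ℝ) := by exact_mod_cast h2
        linarith
      field_simp
end

section
/- Let h > 0, λ > 0, x₀, y₀ ∈ ℝ, let φ(x) = (λ/(πh))^{1/4}·exp{ (i/h)·( (iλ/2)·(x − x₀)² + y₀·x ) }, and for t ∈ (0, π) define φ^t(y) = ∫_ℝ G(y, x, t)·φ(x) dx, where G(y, x, t) = e^{−iπ/4}·(2πh·sin t)^{−1/2}·exp{ (i/h)·( (cot t/2)·(y² + x²) − y·x/sin t ) } is the Mehler propagator. Then for all y ∈ ℝ, |φ^t(y)|² = (λ_t/(πh))^{1/2}·exp(−λ_t·(y − c_t)²/h), where c_t = x₀·cos t + y₀·sin t and λ_t = (λ^{−1}·cos² t + λ·sin² t)^{−1}. -/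
open MeasureTheory Real Complex

/-!
The product of the Mehler kernel and the Gaussian is again a Gaussian in `x`, whose quadratic
coefficient `-(λ - i cot t)/(2h)` has real part `-λ/(2h) < 0`. Mathlib's closed form
`∫ exp (b x² + c x + d) = (π/(-b))^{1/2} exp (d - c²/(4b))` then gives
`|φ^t(y)|² = |C|² (π/|b|) exp (2 Re (d - c²/(4b)))`, and the whole theorem reduces to computing
`|b|` and `Re (d - c²/(4b))`: the latter equals `-λ (x₀ cot t + y₀ - y/sin t)² / (2h(λ² + cot² t))`,
which after multiplying numerator and denominator by `sin² t` is `-λ_t (y - c_t)²/(2h)`.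
-/

noncomputable section

def mehlerKernel (h y x t : ℝ) : ℂ :=
  Complex.exp (-(Complex.I * π / 4)) * ((Real.sqrt (2 * π * h * Real.sin t))⁻¹ : ℝ) *
    Complex.exp ((Complex.I / (h : ℂ)) *
      ((((Real.cos t / Real.sin t) / 2) * (y ^ 2 + x ^ 2) - y * x / Real.sin t : ℝ) : ℂ))

def gaussianWavefunction (h lam x₀ y₀ x : ℝ) : ℂ :=
  ((lam / (π * h)) ^ ((1 : ℝ) / 4) : ℝ) *
    Complex.exp ((Complex.I / (h : ℂ)) *
      ((Complex.I * (lam : ℂ) / 2) * ((x : ℂ) - (x₀ : ℂ)) ^ 2 + (y₀ : ℂ) * (x : ℂ)))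

end

theorem sq_norm_integral_cexp_quadratic {b : ℂ} (hb : b.re < 0) (c d : ℂ) :
    ‖∫ x : ℝ, cexp (b * x ^ 2 + c * x + d)‖ ^ 2 =
      π / ‖b‖ * rexp (2 * (d - c ^ 2 / (4 * b)).re) := by
  have hsqrt : ‖(π / -b) ^ (1 / 2 : ℂ)‖ ^ 2 = π / ‖b‖ := by
    rw [show (1 / 2 : ℂ) = ((1 / 2 : ℝ) : ℂ) by norm_num, norm_cpow_real, ← Real.rpow_natCast,
      ← Real.rpow_mul (norm_nonneg _), norm_div, norm_neg, Complex.norm_real,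
      Real.norm_of_nonneg pi_pos.le]
    norm_num
  rw [integral_cexp_quadratic hb, norm_mul, mul_pow, hsqrt, Complex.norm_exp, ← Real.exp_nat_mul]
  norm_num

theorem sq_norm_integral_chirped_gaussian {h lam : ℝ} (hh : 0 < h) (hlam : 0 < lam)
    (k p q x₀ : ℝ) :
    ‖∫ x : ℝ, cexp (-(lam - I * k) / (2 * h) * x ^ 2 + (lam * x₀ + I * p) / h * x +
      (-(lam * x₀ ^ 2) + I * q) / (2 * h))‖ ^ 2 =
      2 * π * h / √(lam ^ 2 + k ^ 2) *
        rexp (-(lam * (k * x₀ + p) ^ 2 / (lam ^ 2 + k ^ 2)) / h) := by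
  have hre : (-(lam - I * k) / (2 * h)).re < 0 := by
    rw [← ofReal_ofNat, ← ofReal_mul, div_ofReal_re]
    simp only [neg_re, sub_re, ofReal_re, mul_re, I_re, I_im, ofReal_im, zero_mul, mul_zero,
      sub_zero]
    exact div_neg_of_neg_of_pos (neg_lt_zero.2 hlam) (by positivity)
  have hnorm : ‖-(lam - I * k) / (2 * h)‖ = √(lam ^ 2 + k ^ 2) / (2 * h) := by
    rw [norm_div, norm_neg, ← ofReal_ofNat, ← ofReal_mul, norm_real,
      norm_of_nonneg (by positivity), Complex.norm_def, normSq_apply]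
    simp only [sub_re, ofReal_re, mul_re, I_re, I_im, ofReal_im, zero_mul, mul_zero, sub_zero,
      sub_im, mul_im, one_mul, zero_add, zero_sub, mul_neg, neg_mul, neg_neg]
    ring_nf
  have hcompleted : ((-(lam * x₀ ^ 2) + I * q) / (2 * h) -
      ((lam * x₀ + I * p) / h) ^ 2 / (4 * (-(lam - I * k) / (2 * h)))).re =
      -(lam * (k * x₀ + p) ^ 2 / (lam ^ 2 + k ^ 2)) / (2 * h) := by
    simp only [pow_two, neg_sub, sub_re, div_re, add_re, neg_re, mul_re, ofReal_re, ofReal_im,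
      mul_zero, sub_zero, mul_im, zero_mul, add_zero, I_re, I_im, sub_self, re_ofNat, im_ofNat,
      neg_mul, normSq_apply, add_im, neg_im, neg_zero, one_mul, zero_add, zero_div, div_im,
      zero_sub, sub_im]
    field_simp
    ring
  rw [sq_norm_integral_cexp_quadratic hre, hnorm, hcompleted]
  congr 1
  · field_simp
  · ring_nf

theorem mehlerKernel_mul_gaussianWavefunction (h lam x₀ y₀ y x t : ℝ) :
    mehlerKernel h y x t * gaussianWavefunction h lam x₀ y₀ x =
      (cexp (-(I * π / 4)) *
        ((√(2 * π * h * Real.sin t))⁻¹ * (lam / (π * h)) ^ ((1 : ℝ) / 4) : ℝ)) *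
        cexp (-(lam - I * Real.cot t) / (2 * h) * x ^ 2 +
          (lam * x₀ + I * ((y₀ - y / Real.sin t : ℝ) : ℂ)) / h * x +
          (-(lam * x₀ ^ 2) + I * ((Real.cot t * y ^ 2 : ℝ) : ℂ)) / (2 * h)) := by
  rw [mehlerKernel, gaussianWavefunction, Real.cot_eq_cos_div_sin, mul_mul_mul_comm,
    ← Complex.exp_add]
  congr 1
  · push_cast; ring
  · congr 1
    push_cast
    linear_combination (lam * (x - x₀) ^ 2 / (2 * h) : ℂ) * I_sq

theorem rpow_one_div_four_sq {a : ℝ} (ha : 0 ≤ a) : (a ^ ((1 : ℝ) / 4)) ^ 2 = √a := by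
  rw [← Real.rpow_natCast, ← Real.rpow_mul ha, Real.sqrt_eq_rpow]
  norm_num

theorem sq_norm_mehler_prefactor {h lam t : ℝ} (hh : 0 ≤ h) (hlam : 0 ≤ lam)
    (hs : 0 ≤ Real.sin t) :
    ‖cexp (-(I * π / 4)) *
        ((√(2 * π * h * Real.sin t))⁻¹ * (lam / (π * h)) ^ ((1 : ℝ) / 4) : ℝ)‖ ^ 2 =
      (2 * π * h * Real.sin t)⁻¹ * √(lam / (π * h)) := by
  have hphase : (-(I * π / 4)).re = 0 := by simp
  rw [norm_mul, Complex.norm_exp, hphase, Real.exp_zero, one_mul, norm_real,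
    norm_of_nonneg (by positivity), mul_pow, inv_pow, sq_sqrt (by positivity),
    rpow_one_div_four_sq (by positivity)]

theorem inv_mehler_width_eq {lam t : ℝ} (hlam : lam ≠ 0) (hs : Real.sin t ≠ 0) :
    (lam⁻¹ * Real.cos t ^ 2 + lam * Real.sin t ^ 2)⁻¹ =
      lam / (Real.sin t ^ 2 * (lam ^ 2 + Real.cot t ^ 2)) := by
  rw [Real.cot_eq_cos_div_sin]
  field_simp
  ring

/-- Evolution of the Gaussian thermodynamic wavefunction by the Mehler propagator:
for `φ(x) = (λ/(πh))^{1/4}·exp{(i/h)((iλ/2)(x − x₀)² + y₀x)}` and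
`φ^t(y) = ∫ G(y, x, t) φ(x) dx`, one has
`|φ^t(y)|² = (λ_t/(πh))^{1/2}·e^{−λ_t(y − c_t)²/h}` with
`c_t = x₀ cos t + y₀ sin t`, `λ_t = (λ⁻¹ cos² t + λ sin² t)⁻¹`. -/
theorem mehler_evolution_of_gaussian (h lam x₀ y₀ : ℝ) (hh : h > 0) (hlam : lam > 0) :
    let G : ℝ → ℝ → ℝ → ℂ := fun y x t =>
      Complex.exp (-(Complex.I * π / 4)) * ((Real.sqrt (2 * π * h * Real.sin t))⁻¹ : ℝ) *
        Complex.exp ((Complex.I / (h : ℂ)) *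
          ((((Real.cos t / Real.sin t) / 2) * (y ^ 2 + x ^ 2) -
            y * x / Real.sin t : ℝ) : ℂ))
    let φ : ℝ → ℂ := fun x =>
      ((lam / (π * h)) ^ ((1 : ℝ) / 4) : ℝ) *
        Complex.exp ((Complex.I / (h : ℂ)) *
          ((Complex.I * (lam : ℂ) / 2) * ((x : ℂ) - (x₀ : ℂ)) ^ 2 + (y₀ : ℂ) * (x : ℂ)))
    ∀ t ∈ Set.Ioo (0 : ℝ) π, ∀ y : ℝ,
      ‖∫ x : ℝ, G y x t * φ x‖ ^ 2 =
        Real.sqrt (((lam⁻¹ * Real.cos t ^ 2 + lam * Real.sin t ^ 2)⁻¹) / (π * h)) *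
          Real.exp (-((lam⁻¹ * Real.cos t ^ 2 + lam * Real.sin t ^ 2)⁻¹ *
            (y - (x₀ * Real.cos t + y₀ * Real.sin t)) ^ 2 / h)) := by
  intro G φ t ht y
  have hs : 0 < Real.sin t := sin_pos_of_pos_of_lt_pi ht.1 ht.2
  change ‖∫ x, mehlerKernel h y x t * gaussianWavefunction h lam x₀ y₀ x‖ ^ 2 = _
  simp_rw [mehlerKernel_mul_gaussianWavefunction]
  rw [integral_const_mul, norm_mul, mul_pow, sq_norm_mehler_prefactor hh.le hlam.le hs.le,
    sq_norm_integral_chirped_gaussian hh hlam, inv_mehler_width_eq hlam.ne' hs.ne', ← mul_assoc]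
  congr 1
  · rw [show lam / (Real.sin t ^ 2 * (lam ^ 2 + Real.cot t ^ 2)) / (π * h) =
        lam / (π * h) / (Real.sin t ^ 2 * (lam ^ 2 + Real.cot t ^ 2)) by ring,
      Real.sqrt_div' (lam / (π * h)) (by positivity), Real.sqrt_mul (sq_nonneg _),
      Real.sqrt_sq hs.le]
    field_simp
  · congr 1
    rw [Real.cot_eq_cos_div_sin]
    field_simp
    ring
end
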